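/- Let n ≥ 2 and consider 2n qubits partitioned into registers A_1, …, A_n, B_1, …, B_n, initialized in the product of Bell states ⊗_{i=1}^n |Φ⟩_{A_i B_i}. Then for every β = (β_1, …, β_{n−1}) ∈ {0,1}^{n−1}: ( I_{A_1} ⊗ ⟨β|_{A_2 … A_n} ⊗ I_{B_1 … B_n} ) ( CNOT_n on A_1…A_n ⊗ I_B ) ( ⊗_{i=1}^n |Φ⟩_{A_i B_i} ) = 2^{−(n−1)/2} · ( X^{β_1}_{B_2} ⊗ X^{β_2}_{B_3} ⊗ … ⊗ X^{β_{n−1}}_{B_n} ) |GHZ_{n+1}⟩_{A_1 B_1 B_2 … B_n}. Consequently, Protocol 2 deterministically converts n Bell pairs in a star topology into the (n+1)-qubit GHZ state after the Pauli-X corrections. -/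
import Mathlib


open Matrix

/-- Basis labels for registers `A_1, …, A_n, B_1, …, B_n` (`n = n' + 2` qubit pairs):
a pair `(a, b)` of bitstrings, `a` for the `A` registers and `b` for the `B` registers. -/
abbrev PairBasis (n : ℕ) : Type := (Fin n → Fin 2) × (Fin n → Fin 2)

/-- Amplitude of the Bell state `|Φ⟩ = (|00⟩ + |11⟩)/√2` at `(u, v)`. -/
noncomputable def bellAmp (u v : Fin 2) : ℂ :=
  if u = v then ((Real.sqrt 2 : ℂ))⁻¹ else 0

/-- The product of Bell states `⊗_{i} |Φ⟩_{A_i B_i}`. -/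
noncomputable def bellProd (n : ℕ) : PairBasis (n + 2) → ℂ :=
  fun p => ∏ i, bellAmp (p.1 i) (p.2 i)

/-- `CNOT_n ⊗ I_B`: the operator `|0⟩⟨0| ⊗ I^{⊗(n-1)} + |1⟩⟨1| ⊗ X^{⊗(n-1)}`
(the product of CNOTs with control `A_1` and targets `A_2, …, A_n`) acting on the
`A` registers, and the identity on the `B` registers. -/
noncomputable def cnotA (n : ℕ) : Matrix (PairBasis (n + 2)) (PairBasis (n + 2)) ℂ :=
  Matrix.of fun p q =>
    if p.2 = q.2 ∧ p.1 0 = q.1 0 ∧ (∀ i, i ≠ 0 → p.1 i = q.1 i + q.1 0)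
    then (1 : ℂ) else 0

/-- Amplitude of the GHZ state `|GHZ_{n+1}⟩` on registers `A_1, B_1, …, B_n`
at the basis label `(x, b)` (`x` the `A_1` bit, `b` the `B` bits). -/
noncomputable def ghzA1B (n : ℕ) : Fin 2 × (Fin (n + 2) → Fin 2) → ℂ := fun u =>
  ((if u.1 = 0 ∧ u.2 = fun _ => 0 then 1 else 0) +
      (if u.1 = 1 ∧ u.2 = fun _ => 1 then 1 else 0)) / (Real.sqrt 2 : ℂ)

lemma fin2_aab (a c : Fin 2) : a + c + c = a := by revert a c; decide

lemma fin2_aca (a c : Fin 2) : a + c + a = c := by revert a c; decide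

lemma fin2_eq_of_add_eq_zero {a c : Fin 2} (h : a + c = 0) : a = c := by
  revert a c; decide

lemma fin2_eq_of_add_eq_one {a c : Fin 2} (h : a + c = 1) : a = c + 1 := by
  revert a c; decide

/-- **Protocol 2 (Bell pairs in a star to GHZ), state transformation.**
For `n ≥ 2` (written `n + 2`) Bell pairs and every outcome string
`β ∈ {0,1}^{n-1}`, contracting registers `A_2, …, A_n` of
`(CNOT_n ⊗ I_B) ⊗_i |Φ⟩_{A_i B_i}` with the computational bra `⟨β|` gives
`2^{-(n-1)/2}` times `|GHZ_{n+1}⟩_{A_1 B_1 ⋯ B_n}` with `X^{β_i}` applied to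
`B_{i+1}` for each `i`. -/
theorem bell_star_to_ghz (n : ℕ) (β : Fin (n + 1) → Fin 2) :
    (fun (x : Fin 2) (b : Fin (n + 2) → Fin 2) =>
        ((cnotA n).mulVec (bellProd n)) (Fin.cons x β, b))
      = fun (x : Fin 2) (b : Fin (n + 2) → Fin 2) =>
          ((Real.sqrt 2 : ℂ))⁻¹ ^ (n + 1) *
            ghzA1B n (x, fun j => b j + (Fin.cons 0 β : Fin (n + 2) → Fin 2) j) := by
  funext x b
  set q1 : Fin (n + 2) → Fin 2 := Fin.cons x (fun i => β i + x) with hq1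
  have key : ((cnotA n).mulVec (bellProd n)) (Fin.cons x β, b) = bellProd n (q1, b) := by
    rw [Matrix.mulVec, dotProduct]
    rw [Finset.sum_eq_single ((q1, b) : PairBasis (n + 2))]
    · have hC : True ∧ ((Fin.cons x β : Fin (n + 2) → Fin 2) 0 = q1 0) ∧
          (∀ i : Fin (n + 2), i ≠ 0 →
            (Fin.cons x β : Fin (n + 2) → Fin 2) i = q1 i + q1 0) := by
        refine ⟨trivial, by simp [hq1], fun i hi => ?_⟩
        induction i using Fin.cases with
        | zero => exact absurd rfl hi
        | succ i =>
          simp only [hq1, Fin.cons_succ, Fin.cons_zero]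
          exact (fin2_aab (β i) x).symm
      have h1 : cnotA n (Fin.cons x β, b) (q1, b) = 1 := by
        simp only [cnotA, Matrix.of_apply]
        exact if_pos hC
      rw [h1, one_mul]
    · rintro ⟨qa, qb⟩ _ hne
      have hz : cnotA n (Fin.cons x β, b) (qa, qb) = 0 := by
        simp only [cnotA, Matrix.of_apply]
        rw [if_neg]
        rintro ⟨h2, h0, hi⟩
        apply hne
        simp only [Fin.cons_zero] at h0
        have hqa : qa = q1 := by
          funext j
          induction j using Fin.cases with
          | zero => simp [hq1, ← h0]
          | succ j =>
            have h3 := hi j.succ (Fin.succ_ne_zero j)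
            simp only [Fin.cons_succ] at h3
            have h4 : qa j.succ = β j + qa 0 := by
              rw [h3]; exact (fin2_aab _ _).symm
            simp [hq1, h4, ← h0]
        exact Prod.ext hqa h2.symm
      rw [hz, zero_mul]
    · intro h; exact absurd (Finset.mem_univ _) h
  rw [key]
  by_cases h : ∀ i, q1 i = b i
  · have hL : bellProd n (q1, b) = ((Real.sqrt 2 : ℂ))⁻¹ ^ (n + 2) := by
      unfold bellProd
      have hc : ∀ i ∈ Finset.univ, bellAmp ((q1, b).1 i) ((q1, b).2 i)
          = ((Real.sqrt 2 : ℂ))⁻¹ := fun i _ => by simp [bellAmp, h i]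
      rw [Finset.prod_congr rfl hc, Finset.prod_const]
      simp
    have hf : (fun j => b j + (Fin.cons 0 β : Fin (n + 2) → Fin 2) j)
        = fun _ => x := by
      funext j
      induction j using Fin.cases with
      | zero =>
        have := h 0
        simp only [hq1, Fin.cons_zero] at this ⊢
        rw [← this, add_zero]
      | succ j =>
        have := h j.succ
        simp only [hq1, Fin.cons_succ] at this ⊢
        rw [← this]
        exact fin2_aca _ _
    rw [hL, hf]
    have hg : ghzA1B n (x, fun _ => x) = (Real.sqrt 2 : ℂ)⁻¹ := by
      fin_cases x <;> simp [ghzA1B, Fin.ext_iff, div_eq_mul_inv]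
    rw [hg, pow_succ]
  · have hL : bellProd n (q1, b) = 0 := by
      push_neg at h
      obtain ⟨i0, hi0⟩ := h
      unfold bellProd
      exact Finset.prod_eq_zero (Finset.mem_univ i0) (by simp [bellAmp, hi0])
    have hg : ghzA1B n (x, fun j => b j + (Fin.cons 0 β : Fin (n + 2) → Fin 2) j) = 0 := by
      unfold ghzA1B
      rw [if_neg, if_neg]
      · simp
      · rintro ⟨hx, hfun⟩
        have hx' : x = 1 := hx
        apply h
        have hall : ∀ j, b j + (Fin.cons (0 : Fin 2) β : Fin (n + 2) → Fin 2) j = 1 :=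
          fun j => congrFun hfun j
        intro j
        induction j using Fin.cases with
        | zero =>
          have h5 := fin2_eq_of_add_eq_one (hall 0)
          simp only [Fin.cons_zero] at h5
          simp [hq1, h5, hx']
        | succ j =>
          have h5 := fin2_eq_of_add_eq_one (hall j.succ)
          simp only [Fin.cons_succ] at h5
          simp [hq1, h5, hx']
      · rintro ⟨hx, hfun⟩
        have hx' : x = 0 := hx
        apply h
        have hall : ∀ j, b j + (Fin.cons (0 : Fin 2) β : Fin (n + 2) → Fin 2) j = 0 :=
          fun j => congrFun hfun j
        intro j
        induction j using Fin.cases with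
        | zero =>
          have h5 := fin2_eq_of_add_eq_zero (hall 0)
          simp only [Fin.cons_zero] at h5
          simp [hq1, h5, hx']
        | succ j =>
          have h5 := fin2_eq_of_add_eq_zero (hall j.succ)
          simp only [Fin.cons_succ] at h5
          simp [hq1, h5, hx']
    rw [hL, hg, mul_zero]
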